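/- Let X be a countably paracompact normal space, A ⊆ X a closed subset, E a separable Banach space (or separable Fréchet space), and Φ ⊆ X × E an open relation with nonempty convex fibers. Then every continuous map g : A → E with g(a) ∈ Φ(a) for all a ∈ A extends to a continuous selection f : X → E for Φ. -/

import Mathlib

/-- A space is countably paracompact if every countable open cover has a locally
finite open (indexed) refinement. -/
def CountablyParacompact (X : Type*) [TopologicalSpace X] : Prop :=
  ∀ U : ℕ → Set X, (∀ n, IsOpen (U n)) → (⋃ n, U n) = Set.univ →
    ∃ V : ℕ → Set X, (∀ n, IsOpen (V n)) ∧ (⋃ n, V n) = Set.univ ∧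
      (∀ n, V n ⊆ U n) ∧ LocallyFinite V

/-!
The countable dense sequence `uₙ` of `E` turns the fibres of `Φ` into the countable open cover
`{x | (x, uₙ) ∈ Φ}` of `X`; a partition of unity subordinate to a locally finite refinement glues
the constants `uₙ` into a continuous selection, by convexity of the fibres. Selecting from `Φ`
cut down to the `ε`-tube around a map on `A` approximates that map uniformly on `A`;
approximating the remaining error to within `2⁻ⁿ` at step `n` gives a uniformly Cauchy
sequence of continuous maps whose limit extends `g`. An Urysohn function `u`, equal to `1` on
`A` and `0` where the extension `h` leaves `Φ`, then blends `h` with a global selection `f₀` into `u • h + (1 - u) • f₀`.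
-/

open Set Filter Topology Metric

theorem exists_seq_of_forall_exists_succ {α : Type*} {P : ℕ → α → Prop} {R : ℕ → α → α → Prop}
    (h₀ : ∃ a, P 0 a) (h : ∀ n a, P n a → ∃ b, P (n + 1) b ∧ R n a b) :
    ∃ s : ℕ → α, ∀ n, P n (s n) ∧ R n (s n) (s (n + 1)) := by
  obtain ⟨a₀, ha₀⟩ := h₀
  choose F hF using h
  let t : ∀ n, {a // P n a} := fun n =>
    Nat.rec ⟨a₀, ha₀⟩ (fun n a => ⟨F n a a.2, (hF n a a.2).1⟩) n
  exact ⟨fun n => (t n).1, fun n => ⟨(t n).2, (hF n (t n).1 (t n).2).2⟩⟩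

theorem exists_continuous_tendsto_of_dist_le_geometric_two {X E : Type*} [TopologicalSpace X]
    [PseudoMetricSpace E] [CompleteSpace E] {S : ℕ → X → E} (hS : ∀ n, Continuous (S n))
    {C : ℝ} (hdist : ∀ n x, dist (S n x) (S (n + 1) x) ≤ C / 2 / 2 ^ n) :
    ∃ f : C(X, E), ∀ x, Tendsto (S · x) atTop (𝓝 (f x)) := by
  choose f hf using fun x =>
    cauchySeq_tendsto_of_complete (cauchySeq_of_le_geometric_two (hdist · x))
  have hunif : TendstoUniformly S f atTop := by
    rw [Metric.tendstoUniformly_iff]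
    intro ε hε
    have hlim : Tendsto (fun n : ℕ => C / 2 ^ n) atTop (𝓝 0) :=
      tendsto_const_nhds.div_atTop (tendsto_pow_atTop_atTop_of_one_lt one_lt_two)
    filter_upwards [hlim.eventually (gt_mem_nhds hε)] with n hn x
    rw [dist_comm]
    exact (dist_le_of_le_geometric_two_of_tendsto (hdist · x) (hf x) n).trans_lt hn
  exact ⟨⟨f, hunif.continuous (Frequently.of_forall hS)⟩, hf⟩

theorem isOpen_setOf_forall_mem_ball {X E : Type*} [TopologicalSpace X] [PseudoMetricSpace E]
    {A : Set X} (hA : IsClosed A) {w : A → E} (hw : Continuous w) (ε : ℝ) :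
    IsOpen {p : X × E | ∀ h : p.1 ∈ A, p.2 ∈ ball (w ⟨p.1, h⟩) ε} := by
  have hclosed : IsClosed {q : A × E | ε ≤ dist q.2 (w q.1)} :=
    isClosed_le continuous_const (continuous_snd.dist (hw.comp continuous_fst))
  have himage := (hA.isClosedEmbedding_subtypeVal.prodMap IsClosedEmbedding.id).isClosedMap _ hclosed
  rw [← isClosed_compl_iff]
  convert himage using 1
  ext ⟨x, y⟩
  simp [Prod.map]

namespace CountablyParacompact

variable {X E : Type*} [TopologicalSpace X] [NormalSpace X]

theorem exists_continuous_selection (hcp : CountablyParacompact X)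
    [AddCommGroup E] [Module ℝ E] [TopologicalSpace E] [ContinuousAdd E] [ContinuousSMul ℝ E]
    [TopologicalSpace.SeparableSpace E] {Φ : Set (X × E)} (hΦ : IsOpen Φ)
    (hne : ∀ x, {y | (x, y) ∈ Φ}.Nonempty) (hconv : ∀ x, Convex ℝ {y | (x, y) ∈ Φ}) :
    ∃ f : C(X, E), ∀ x, (x, f x) ∈ Φ := by
  set u := TopologicalSpace.denseSeq E
  have hUo : ∀ n, IsOpen {x | (x, u n) ∈ Φ} := fun n => hΦ.preimage (by fun_prop)
  have hUcover : (⋃ n, {x | (x, u n) ∈ Φ}) = univ := by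
    refine eq_univ_of_forall fun x => mem_iUnion.2 ?_
    exact (TopologicalSpace.denseRange_denseSeq E).exists_mem_open
      (hΦ.preimage (by fun_prop)) (hne x)
  obtain ⟨V, hVo, hVcover, hVU, hVlf⟩ := hcp _ hUo hUcover
  obtain ⟨ρ, hρ⟩ :=
    PartitionOfUnity.exists_isSubordinate_of_locallyFinite isClosed_univ V hVo hVlf hVcover.ge
  refine ⟨⟨fun x => ∑ᶠ n, ρ n x • u n,
    hρ.continuous_finsum_smul hVo fun _ => continuousOn_const⟩, fun x => ?_⟩
  exact ρ.finsum_smul_mem_convex (g := fun n _ => u n) (mem_univ x)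
    (fun n hn => hVU n (hρ n (subset_tsupport _ hn))) (hconv x)

theorem exists_continuous_selection_dist_lt (hcp : CountablyParacompact X)
    [SeminormedAddCommGroup E] [NormedSpace ℝ E] [TopologicalSpace.SeparableSpace E]
    {A : Set X} (hA : IsClosed A) {w : A → E} (hw : Continuous w)
    {Φ : Set (X × E)} (hΦ : IsOpen Φ) (hne : ∀ x, {y | (x, y) ∈ Φ}.Nonempty)
    (hconv : ∀ x, Convex ℝ {y | (x, y) ∈ Φ}) (hwΦ : ∀ a : A, ((a : X), w a) ∈ Φ)
    {ε : ℝ} (hε : 0 < ε) :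
    ∃ f : C(X, E), (∀ x, (x, f x) ∈ Φ) ∧ ∀ a : A, dist (f a) (w a) < ε := by
  set Ψ := Φ ∩ {p : X × E | ∀ h : p.1 ∈ A, p.2 ∈ ball (w ⟨p.1, h⟩) ε}
  have hΨne : ∀ x, {y | (x, y) ∈ Ψ}.Nonempty := by
    intro x
    by_cases hx : x ∈ A
    · exact ⟨w ⟨x, hx⟩, hwΦ ⟨x, hx⟩, fun _ => mem_ball_self hε⟩
    · obtain ⟨y, hy⟩ := hne x
      exact ⟨y, hy, fun h => absurd h hx⟩
  have hΨconv : ∀ x, Convex ℝ {y | (x, y) ∈ Ψ} := by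
    intro x
    have hball : Convex ℝ {y : E | ∀ h : x ∈ A, y ∈ ball (w ⟨x, h⟩) ε} := by
      simp only [ofPred_forall, ofPred_mem_eq]
      exact convex_iInter fun _ => convex_ball _ _
    exact (hconv x).inter hball
  obtain ⟨f, hf⟩ := hcp.exists_continuous_selection
    (hΦ.inter (isOpen_setOf_forall_mem_ball hA hw ε)) hΨne hΨconv
  exact ⟨f, fun x => (hf x).1, fun a => (hf a).2 a.2⟩

theorem exists_continuous_extension (hcp : CountablyParacompact X)
    [NormedAddCommGroup E] [NormedSpace ℝ E] [CompleteSpace E] [TopologicalSpace.SeparableSpace E]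
    {A : Set X} (hA : IsClosed A) {g : A → E} (hg : Continuous g) :
    ∃ f : C(X, E), ∀ a : A, f a = g a := by
  have hfirst : ∃ S : C(X, E), ∀ a : A, dist (S a) (g a) < 1 / 2 ^ 0 := by
    obtain ⟨S, -, hS⟩ := hcp.exists_continuous_selection_dist_lt hA hg isOpen_univ
      (fun _ => univ_nonempty) (fun _ => convex_univ) (fun _ => trivial) one_pos
    exact ⟨S, by simpa using hS⟩
  -- add to `S` a correction `v` with `‖v‖ < 2⁻ⁿ` that approximates the error `g - S` on `A`
  have hnext : ∀ n (S : C(X, E)), (∀ a : A, dist (S a) (g a) < 1 / 2 ^ n) →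
      ∃ S' : C(X, E), (∀ a : A, dist (S' a) (g a) < 1 / 2 ^ (n + 1)) ∧
        ∀ x, dist (S x) (S' x) ≤ 1 / 2 ^ n := by
    intro n S hS
    have hr : (0 : ℝ) < 1 / 2 ^ n := by positivity
    obtain ⟨v, hvΦ, hv⟩ := hcp.exists_continuous_selection_dist_lt hA
      (hg.sub (S.continuous.comp continuous_subtype_val))
      (Φ := Prod.snd ⁻¹' ball 0 (1 / 2 ^ n)) (isOpen_ball.preimage continuous_snd)
      (fun _ => ⟨0, mem_ball_self hr⟩) (fun _ => convex_ball 0 _)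
      (fun a => by simpa [dist_eq_norm, norm_sub_rev] using hS a)
      (by positivity : (0 : ℝ) < 1 / 2 ^ (n + 1))
    refine ⟨S + v, fun a => ?_, fun x => ?_⟩
    · simpa [dist_eq_norm, sub_sub, add_comm, sub_sub_eq_add_sub] using hv a
    · simpa [dist_eq_norm] using (mem_ball_zero_iff.1 (hvΦ x)).le
  obtain ⟨S, hS⟩ := exists_seq_of_forall_exists_succ hfirst hnext
  obtain ⟨f, hf⟩ := exists_continuous_tendsto_of_dist_le_geometric_two
    (fun n => (S n).continuous) (C := 2) fun n x => by simpa using (hS n).2 x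
  refine ⟨f, fun a => tendsto_nhds_unique (hf a) ?_⟩
  rw [tendsto_iff_dist_tendsto_zero]
  refine squeeze_zero (fun _ => dist_nonneg) (fun n => ((hS n).1 a).le) ?_
  exact tendsto_const_nhds.div_atTop (tendsto_pow_atTop_atTop_of_one_lt one_lt_two)

end CountablyParacompact

theorem exists_continuous_selection_eqOn {X E : Type*} [TopologicalSpace X]
    [NormalSpace X] [AddCommGroup E] [Module ℝ E] [TopologicalSpace E] [ContinuousAdd E]
    [ContinuousSMul ℝ E] {Φ : Set (X × E)} (hΦ : IsOpen Φ) (hconv : ∀ x, Convex ℝ {y | (x, y) ∈ Φ})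
    {A : Set X} (hA : IsClosed A) {f₀ h : C(X, E)} (hf₀ : ∀ x, (x, f₀ x) ∈ Φ)
    (hh : ∀ x ∈ A, (x, h x) ∈ Φ) :
    ∃ f : C(X, E), EqOn f h A ∧ ∀ x, (x, f x) ∈ Φ := by
  set W := {x | (x, h x) ∈ Φ}
  have hWo : IsOpen W := hΦ.preimage (by fun_prop)
  obtain ⟨u, hu0, hu1, hu01⟩ := exists_continuous_zero_one_of_isClosed hWo.isClosed_compl hA
    (disjoint_compl_left_iff_subset.2 hh)
  refine ⟨⟨fun x => u x • h x + (1 - u x) • f₀ x, by fun_prop⟩, fun x hx => ?_, fun x => ?_⟩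
  · simp [hu1 hx]
  · by_cases hxW : x ∈ W
    · exact hconv x hxW (hf₀ x) (hu01 x).1 (sub_nonneg.2 (hu01 x).2) (add_sub_cancel _ _)
    · simpa [hu0 hxW] using hf₀ x

theorem stmt_14_general {X E : Type*} [TopologicalSpace X] [NormalSpace X]
    (hcp : CountablyParacompact X)
    [NormedAddCommGroup E] [NormedSpace ℝ E] [CompleteSpace E]
    [TopologicalSpace.SeparableSpace E]
    (A : Set X) (hA : IsClosed A)
    (Φ : Set (X × E)) (hΦ : IsOpen Φ)
    (hfib : ∀ x : X, {y : E | (x, y) ∈ Φ}.Nonempty ∧ Convex ℝ {y : E | (x, y) ∈ Φ})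
    (g : A → E) (hg : Continuous g) (hsel : ∀ a : A, ((a : X), g a) ∈ Φ) :
    ∃ f : X → E, Continuous f ∧ (∀ a : A, f a = g a) ∧ ∀ x : X, (x, f x) ∈ Φ := by
  have hconv x := (hfib x).2
  obtain ⟨h, hh⟩ := hcp.exists_continuous_extension hA hg
  obtain ⟨f₀, hf₀⟩ := hcp.exists_continuous_selection hΦ (fun x => (hfib x).1) hconv
  obtain ⟨f, hfA, hfΦ⟩ := exists_continuous_selection_eqOn hΦ hconv hA hf₀
    (h := h) fun x hx => hh ⟨x, hx⟩ ▸ hsel ⟨x, hx⟩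
  exact ⟨f, f.continuous, fun a => (hfA a.2).trans (hh a), hfΦ⟩

/-- Over a countably paracompact normal domain, every continuous partial selection
on a closed set for a convex-valued open relation into a separable Banach space
extends to a continuous selection. -/
theorem stmt_14 {X E : Type*} [TopologicalSpace X] [T2Space X] [NormalSpace X]
    (hcp : CountablyParacompact X)
    [NormedAddCommGroup E] [NormedSpace ℝ E] [CompleteSpace E]
    [TopologicalSpace.SeparableSpace E]
    (A : Set X) (hA : IsClosed A)
    (Φ : Set (X × E)) (hΦ : IsOpen Φ)
    (hfib : ∀ x : X, {y : E | (x, y) ∈ Φ}.Nonempty ∧ Convex ℝ {y : E | (x, y) ∈ Φ})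
    (g : A → E) (hg : Continuous g) (hsel : ∀ a : A, ((a : X), g a) ∈ Φ) :
    ∃ f : X → E, Continuous f ∧ (∀ a : A, f a = g a) ∧ ∀ x : X, (x, f x) ∈ Φ :=
  stmt_14_general hcp A hA Φ hΦ hfib g hg hsel
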